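/- If φ is mixing with respect to a finite invariant measure μ and {C_i}_{i∈I} is a nontrivial finite partition of X (each cell of positive μ-measure), then the stochastic matrix W with entries W_{i,j} := P_*[φ^{-1}(C_j) | C_i] defines an ergodic (irreducible, aperiodic) Markov chain whose unique stationary distribution is π_i = P_*[C_i]. -/

import Mathlib

open MeasureTheory Filter Set Topology Matrix

/-!
If `μ(φ^{-n} C_j ∩ C_i) > 0`, the cells visited by `x, φ x, …, φⁿ x` along a set of positive
measure form a chain `i = k₀, …, kₙ = j` of positive transitions, so `(W ^ n) i j > 0`.
Mixing sends `μ(φ^{-n} C_j ∩ C_i)` to `P_*[C_j] μ(C_i) > 0`, hence `W` is primitive, and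
invariance of `μ` gives `π W = π`. For uniqueness, if `M = W ^ k` has positive entries and
`v M = v` with `∑ v = 0`, `v ≠ 0`, then `v` has entries of both signs, so
`|(v M)_j| < (|v| M)_j` for every `j`; summing over `j` contradicts `M 1 = 1`.
-/

theorem Finset.abs_sum_lt_sum_abs {ι G : Type*} [Fintype ι] [AddCommGroup G] [LinearOrder G]
    [IsOrderedAddMonoid G] {f : ι → G} {a b : ι} (ha : 0 < f a) (hb : f b < 0) :
    |∑ i, f i| < ∑ i, |f i| := by
  have hneg : 0 < ∑ i, (|f i| - f i) :=
    (sub_pos.2 (hb.trans_le (abs_nonneg _))).trans_le <| Finset.single_le_sum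
      (f := fun i => |f i| - f i) (fun i _ => sub_nonneg.2 (le_abs_self _)) (Finset.mem_univ b)
  have hpos : 0 < ∑ i, (|f i| + f i) :=
    (add_pos_of_nonneg_of_pos (abs_nonneg _) ha).trans_le <| Finset.single_le_sum
      (f := fun i => |f i| + f i) (fun i _ => neg_le_iff_add_nonneg'.1 (neg_abs_le _))
      (Finset.mem_univ a)
  rw [Finset.sum_sub_distrib, sub_pos] at hneg
  rw [Finset.sum_add_distrib] at hpos
  exact abs_lt.2 ⟨neg_lt_iff_pos_add'.2 hpos, hneg⟩

namespace Matrix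

variable {n R : Type*} [Fintype n] [DecidableEq n]

theorem vecMul_pow_eq_self [Semiring R] {M : Matrix n n R} {v : n → R}
    (hv : v ᵥ* M = v) (k : ℕ) : v ᵥ* M ^ k = v := by
  induction k with
  | zero => simp
  | succ k ih => rw [pow_succ, ← vecMul_vecMul, ih, hv]

theorem isPrimitive_of_eventually_pos [Ring R] [LinearOrder R] {M : Matrix n n R}
    (hM : ∀ i j, 0 ≤ M i j) (h : ∀ i j, ∀ᶠ k in atTop, 0 < (M ^ k) i j) : M.IsPrimitive :=
  ⟨hM, ((eventually_gt_atTop 0).and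
    (eventually_all.2 fun i => eventually_all.2 (h i))).exists⟩

section StrictOrderedRing

variable [Ring R] [LinearOrder R] [IsStrictOrderedRing R]

theorem eq_zero_of_vecMul_eq_self_of_pos {M : Matrix n n R} (hM : M ∈ rowStochastic R n)
    (hpos : ∀ i j, 0 < M i j) {v : n → R} (hv : v ᵥ* M = v) (hsum : ∑ i, v i = 0) : v = 0 := by
  by_contra hne
  have hne' : ∃ i ∈ Finset.univ, v i ≠ 0 := by simpa [funext_iff] using hne
  obtain ⟨a, -, ha⟩ := Finset.exists_pos_of_sum_zero_of_exists_nonzero v hsum hne'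
  obtain ⟨b, -, hb⟩ := Finset.exists_pos_of_sum_zero_of_exists_nonzero (s := Finset.univ) (-v)
    (by simp [hsum]) (by simpa using hne')
  have hstrict (j : n) : |v j| < ∑ i, |v i| * M i j :=
    calc |v j| = |∑ i, v i * M i j| := by rw [← congrFun hv j]; rfl
      _ < ∑ i, |v i * M i j| := Finset.abs_sum_lt_sum_abs
          (mul_pos ha (hpos a j)) (mul_neg_of_neg_of_pos (neg_pos.1 hb) (hpos b j))
      _ = ∑ i, |v i| * M i j := by simp only [abs_mul, abs_of_pos (hpos _ j)]
  have : ∑ j, |v j| < ∑ i, |v i| :=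
    calc ∑ j, |v j| < ∑ j, ∑ i, |v i| * M i j :=
          Finset.sum_lt_sum_of_nonempty ⟨a, Finset.mem_univ a⟩ fun j _ => hstrict j
      _ = ∑ i, |v i| := by
          rw [Finset.sum_comm]
          simp only [← Finset.mul_sum, sum_row_of_mem_rowStochastic hM, mul_one]
  exact this.false

theorem IsPrimitive.eq_of_vecMul_eq_self {M : Matrix n n R} (hprim : M.IsPrimitive)
    (hM : M ∈ rowStochastic R n) {p q : n → R} (hp : p ᵥ* M = p) (hq : q ᵥ* M = q)
    (hsum : ∑ i, p i = ∑ i, q i) : p = q := by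
  obtain ⟨k, -, hk⟩ := hprim.exists_pos_pow
  refine sub_eq_zero.1 (eq_zero_of_vecMul_eq_self_of_pos (pow_mem hM k) hk ?_ ?_)
  · rw [sub_vecMul, vecMul_pow_eq_self hp, vecMul_pow_eq_self hq]
  · simp [Finset.sum_sub_distrib, hsum]

end StrictOrderedRing

end Matrix

section CellTransition

variable {X I : Type*} [MeasurableSpace X] {μ : Measure X} {φ : X → X} {C : I → Set X}

variable (μ φ C) in
noncomputable def cellTransitionMatrix : Matrix I I ℝ :=
  Matrix.of fun i j => μ.real (φ ⁻¹' C j ∩ C i) / μ.real (C i)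

theorem cellTransitionMatrix_nonneg (i j : I) : 0 ≤ cellTransitionMatrix μ φ C i j :=
  div_nonneg measureReal_nonneg measureReal_nonneg

variable [Fintype I] [IsFiniteMeasure μ]

theorem sum_measureReal_inter_of_partition (hC : ∀ i, MeasurableSet (C i))
    (hdisj : Pairwise (Function.onFun Disjoint C)) (hcover : ⋃ i, C i = univ)
    {A : Set X} (hA : MeasurableSet A) : ∑ i, μ.real (A ∩ C i) = μ.real A := by
  conv_rhs => rw [← inter_univ A, ← hcover, inter_iUnion]
  exact (measureReal_iUnion_fintype
    (fun i j hij => (hdisj hij).mono inter_subset_right inter_subset_right)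
    fun i => hA.inter (hC i)).symm

theorem sum_measureReal_preimage_inter_of_partition (hφ : Measurable φ)
    (hC : ∀ i, MeasurableSet (C i)) (hdisj : Pairwise (Function.onFun Disjoint C))
    (hcover : ⋃ i, C i = univ) {A : Set X} (hA : MeasurableSet A) :
    ∑ i, μ.real (φ ⁻¹' C i ∩ A) = μ.real A := by
  simp_rw [inter_comm _ A]
  exact sum_measureReal_inter_of_partition (fun i => hφ (hC i))
    (fun i j hij => (hdisj hij).preimage φ) (by rw [← preimage_iUnion, hcover, preimage_univ]) hA

theorem sum_measureReal_mul_cellTransitionMatrix (hφ : MeasurePreserving φ μ μ)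
    (hC : ∀ i, MeasurableSet (C i)) (hdisj : Pairwise (Function.onFun Disjoint C))
    (hcover : ⋃ i, C i = univ) (j : I) :
    ∑ i, μ.real (C i) * cellTransitionMatrix μ φ C i j = μ.real (C j) := by
  simp only [cellTransitionMatrix, Matrix.of_apply]
  rw [Finset.sum_congr rfl fun i _ =>
      mul_div_cancel_of_imp' fun h => measureReal_mono_null inter_subset_right h,
    sum_measureReal_inter_of_partition hC hdisj hcover (hφ.measurable (hC j)),
    hφ.measureReal_preimage (hC j).nullMeasurableSet]

variable [DecidableEq I]

theorem cellTransitionMatrix_mem_rowStochastic (hφ : Measurable φ)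
    (hC : ∀ i, MeasurableSet (C i)) (hdisj : Pairwise (Function.onFun Disjoint C))
    (hcover : ⋃ i, C i = univ) (hpos : ∀ i, 0 < μ (C i)) :
    cellTransitionMatrix μ φ C ∈ Matrix.rowStochastic ℝ I := by
  refine Matrix.mem_rowStochastic_iff_sum.2 ⟨cellTransitionMatrix_nonneg, fun i => ?_⟩
  simp only [cellTransitionMatrix, Matrix.of_apply, ← Finset.sum_div,
    sum_measureReal_preimage_inter_of_partition hφ hC hdisj hcover (hC i)]
  exact div_self (ENNReal.toReal_pos (hpos i).ne' (measure_ne_top _ _)).ne'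

theorem cellTransitionMatrix_pow_pos (hφ : MeasurePreserving φ μ μ)
    (hC : ∀ i, MeasurableSet (C i)) (hdisj : Pairwise (Function.onFun Disjoint C))
    (hcover : ⋃ i, C i = univ) {n : ℕ} {i j : I}
    (h : 0 < μ.real (φ^[n] ⁻¹' C j ∩ C i)) : 0 < (cellTransitionMatrix μ φ C ^ n) i j := by
  induction n generalizing i j with
  | zero =>
    obtain rfl : i = j := by
      by_contra hij
      simp [(hdisj hij).symm.inter_eq] at h
    simp
  | succ n ih =>
    set A := φ^[n + 1] ⁻¹' C j ∩ C i
    have hA : MeasurableSet A := ((hC j).preimage (hφ.measurable.iterate _)).inter (hC i)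
    obtain ⟨k, -, hk⟩ : ∃ k ∈ Finset.univ, (0 : ℝ) < μ.real (φ ⁻¹' C k ∩ A) := by
      refine Finset.exists_lt_of_sum_lt ?_
      rwa [sum_measureReal_preimage_inter_of_partition hφ.measurable hC hdisj hcover hA,
        Finset.sum_const_zero]
    have hik : 0 < cellTransitionMatrix μ φ C i k :=
      div_pos (hk.trans_le (measureReal_mono fun x hx => ⟨hx.1, hx.2.2⟩))
        (hk.trans_le (measureReal_mono fun x hx => hx.2.2))
    have hkj : 0 < (cellTransitionMatrix μ φ C ^ n) k j := by
      refine ih (hk.trans_le ?_)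
      rw [← hφ.measureReal_preimage
        (((hC j).preimage (hφ.measurable.iterate n)).inter (hC k)).nullMeasurableSet]
      refine measureReal_mono fun x hx => ⟨?_, hx.1⟩
      simpa [A, Function.iterate_succ_apply] using hx.2.1
    rw [pow_succ', Matrix.mul_apply]
    exact (mul_pos hik hkj).trans_le (Finset.single_le_sum
      (fun l _ => mul_nonneg (cellTransitionMatrix_nonneg i l)
        (Matrix.pow_apply_nonneg cellTransitionMatrix_nonneg n l j)) (Finset.mem_univ k))

end CellTransition

theorem approximating_chain_ergodic
    {X : Type*} [MeasurableSpace X] {I : Type*} [Fintype I] [DecidableEq I]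
    (μ : Measure X) [IsFiniteMeasure μ]
    (φ : X → X) (hφ : MeasurePreserving φ μ μ)
    (hmix : ∀ A B : Set X, MeasurableSet A → MeasurableSet B →
      Tendsto (fun n => (μ (φ^[n] ⁻¹' A ∩ B)).toReal) atTop
        (𝓝 ((μ A).toReal / (μ Set.univ).toReal * (μ B).toReal)))
    (C : I → Set X) (hmeas : ∀ i, MeasurableSet (C i))
    (hdisj : Pairwise (Function.onFun Disjoint C)) (hcover : ⋃ i, C i = Set.univ)
    (hpos : ∀ i, 0 < μ (C i))
    (W : Matrix I I ℝ)
    (hW : ∀ i j, W i j = (μ (φ ⁻¹' (C j) ∩ C i)).toReal / (μ (C i)).toReal)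
    (π : I → ℝ) (hπ : ∀ i, π i = (μ (C i)).toReal / (μ Set.univ).toReal) :
    (∀ i j, ∃ N : ℕ, ∀ n ≥ N, 0 < (W ^ n) i j) ∧
    (∀ j, ∑ i, π i * W i j = π j) ∧
    (∀ π' : I → ℝ, (∀ i, 0 ≤ π' i) → ∑ i, π' i = 1 →
      (∀ j, ∑ i, π' i * W i j = π' j) → π' = π) := by
  obtain rfl : W = cellTransitionMatrix μ φ C := Matrix.ext hW
  simp only [← measureReal_def] at hπ
  have hCpos (i : I) : 0 < μ.real (C i) := ENNReal.toReal_pos (hpos i).ne' (measure_ne_top _ _)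
  have hXpos (i : I) : 0 < μ.real univ := (hCpos i).trans_le (measureReal_mono (subset_univ _))
  have hev (i j : I) : ∀ᶠ n in atTop, 0 < (cellTransitionMatrix μ φ C ^ n) i j :=
    ((hmix _ _ (hmeas j) (hmeas i)).eventually
      (eventually_gt_nhds (mul_pos (div_pos (hCpos j) (hXpos i)) (hCpos i)))).mono
      fun n hn => cellTransitionMatrix_pow_pos hφ hmeas hdisj hcover hn
  have hπW : π ᵥ* cellTransitionMatrix μ φ C = π := funext fun j => by
    simp_rw [Matrix.vecMul, dotProduct, hπ, div_mul_eq_mul_div, ← Finset.sum_div]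
    exact congrArg (· / _) (sum_measureReal_mul_cellTransitionMatrix hφ hmeas hdisj hcover j)
  refine ⟨fun i j => eventually_atTop.1 (hev i j), fun j => congrFun hπW j,
    fun π' _ hsum hπ' => ?_⟩
  obtain ⟨i, -⟩ := Finset.nonempty_of_sum_ne_zero (hsum.trans_ne one_ne_zero)
  have hπsum : ∑ i, π i = 1 := by
    simp_rw [hπ, ← Finset.sum_div]
    rw [← measureReal_iUnion_fintype (μ := μ) hdisj hmeas, hcover, div_self (hXpos i).ne']
  exact (Matrix.isPrimitive_of_eventually_pos cellTransitionMatrix_nonneg hev).eq_of_vecMul_eq_self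
    (cellTransitionMatrix_mem_rowStochastic hφ.measurable hmeas hdisj hcover hpos)
    (funext hπ') hπW (hsum.trans hπsum.symm)
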